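/- arXiv:2011.11788 — 4 statements merged into one kernel-verified Lean document; each statement's English description precedes it below -/
import Mathlib

section
/- Let δ ∈ (0,1), let 𝒦 be a finite index set, let x : 𝒦 → ℝ≥0, and define f(K) := ((1+(|K|-1)δ)/|K|)·Σ_{k∈K} x k for nonempty K ⊆ 𝒦. Let K* ⊆ 𝒦 be nonempty with |K*| = m ≥ 2, let b ∈ K* and j ∈ 𝒦 \ K*. If f(K*\{b}) ≤ f(K*), x b ≤ x j and x b < x j, then f(K* ∪ {j}) > f(K*). -/
theorem insert_increases_test_function {ι : Type*} [DecidableEq ι]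
    (δ : ℝ) (hδ0 : 0 < δ) (hδ1 : δ < 1) (x : ι → ℝ) (hx : ∀ k, 0 ≤ x k)
    (Kstar : Finset ι) (hm : 2 ≤ Kstar.card) (b j : ι)
    (hb : b ∈ Kstar) (hj : j ∉ Kstar)
    (f : Finset ι → ℝ)
    (hf : ∀ K : Finset ι, f K = ((1 + ((K.card : ℝ) - 1) * δ) / (K.card : ℝ)) * ∑ k ∈ K, x k)
    (h1 : f (Kstar.erase b) ≤ f Kstar) (h2 : x b ≤ x j) (h3 : x b < x j) :
    f Kstar < f (insert j Kstar) := by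
  have hmR : (2:ℝ) ≤ (Kstar.card : ℝ) := by exact_mod_cast hm
  set m : ℝ := (Kstar.card : ℝ) with hmdef
  set S : ℝ := ∑ k ∈ Kstar, x k with hSdef
  have hS0 : 0 ≤ S := Finset.sum_nonneg fun k _ => hx k
  have hbS : x b ≤ S := Finset.single_le_sum (fun k _ => hx k) hb
  have hce : ((Kstar.erase b).card : ℝ) = m - 1 := by
    rw [Finset.card_erase_of_mem hb]
    push_cast [Nat.cast_sub (by omega : 1 ≤ Kstar.card)]
    ring
  have hse : (∑ k ∈ Kstar.erase b, x k) = S - x b :=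
    Finset.sum_erase_eq_sub hb
  have hci : (((insert j Kstar).card : ℝ)) = m + 1 := by
    rw [Finset.card_insert_of_notMem hj]
    push_cast; ring
  have hsi : (∑ k ∈ insert j Kstar, x k) = x j + S := Finset.sum_insert hj
  rw [hf, hf, hce, hse] at h1
  rw [hf, hf, hci, hsi]
  have hm1 : (0:ℝ) < m - 1 := by linarith
  have hm0 : (0:ℝ) < m := by linarith
  have hmp1 : (0:ℝ) < m + 1 := by linarith
  rw [div_mul_eq_mul_div, div_mul_eq_mul_div, div_le_div_iff₀ hm1 hm0] at h1
  rw [div_mul_eq_mul_div, div_mul_eq_mul_div, div_lt_div_iff₀ hm0 hmp1]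
  -- key: (1-δ)*S ≤ m*(1+(m-2)*δ)*(x b)
  have key : (1-δ)*S ≤ m*(1+(m-2)*δ)*(x b) := by nlinarith [h1]
  have hcpos : (0:ℝ) < m * (1 + (m-2)*δ) := by nlinarith [mul_nonneg (by linarith : (0:ℝ) ≤ m-2) hδ0.le]
  have step1 : (1-δ)*S < m*(1+(m-2)*δ)*(x j) := by nlinarith
  have step2 : m*(1+(m-2)*δ)*(x j) ≤ m*(1+m*δ)*(x j) := by nlinarith [mul_nonneg (mul_nonneg hm0.le hδ0.le) (hx j)]
  nlinarith [step1, step2]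
end

section
/- Let δ ∈ (0,1), let 𝒦 be a finite set, x : 𝒦 → ℝ≥0, f(K) := ((1+(|K|-1)δ)/|K|)·Σ_{k∈K} x k for nonempty K ⊆ 𝒦, and let K* be a maximizer of f with |K*| = m. Then every j ∈ 𝒦 \ K* satisfies (1-δ)·Σ_{k∈K*} x k ≥ m·(1+m·δ)·x j; that is, x j ≤ (1-δ)·Σ_{k∈K*} x k / (m·(1+m·δ)). -/
/-!
Adding an element `j ∉ K*` to `K*` changes `f` by a quantity whose sign, after clearing the
denominators `m` and `m + 1`, is that of `m (1 + m δ) x j - (1 - δ) Σ_{k ∈ K*} x k`;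
maximality of `K*` forces it to be nonpositive.
-/

open Finset

noncomputable def subsetValue {ι : Type*} (δ : ℝ) (x : ι → ℝ) (K : Finset ι) : ℝ :=
  ((1 + ((K.card : ℝ) - 1) * δ) / (K.card : ℝ)) * ∑ k ∈ K, x k

lemma succ_weight_mul_le_weight_mul_iff {δ m S y : ℝ} (hm : 0 < m) :
    (1 + (m + 1 - 1) * δ) / (m + 1) * (S + y) ≤ (1 + (m - 1) * δ) / m * S ↔
      m * (1 + m * δ) * y ≤ (1 - δ) * S := by
  rw [div_mul_eq_mul_div, div_mul_eq_mul_div, div_le_div_iff₀ (by positivity) hm]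
  constructor <;> intro h <;> linarith

lemma subsetValue_insert_le_iff {ι : Type*} [DecidableEq ι] (δ : ℝ) (x : ι → ℝ)
    {K : Finset ι} (hK : K.Nonempty) {j : ι} (hj : j ∉ K) :
    subsetValue δ x (insert j K) ≤ subsetValue δ x K ↔
      (K.card : ℝ) * (1 + K.card * δ) * x j ≤ (1 - δ) * ∑ k ∈ K, x k := by
  rw [subsetValue, subsetValue, card_insert_of_notMem hj, sum_insert hj, add_comm (x j),
    Nat.cast_succ]
  exact succ_weight_mul_le_weight_mul_iff (by exact_mod_cast hK.card_pos)

theorem non_dominant_small_general {ι : Type*}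
    (δ : ℝ) (hδ0 : 0 < δ) (x : ι → ℝ)
    (f : Finset ι → ℝ)
    (hf : ∀ K : Finset ι, f K = ((1 + ((K.card : ℝ) - 1) * δ) / (K.card : ℝ)) * ∑ k ∈ K, x k)
    (Kstar : Finset ι) (hKne : Kstar.Nonempty)
    (hmax : ∀ K : Finset ι, K.Nonempty → f K ≤ f Kstar)
    (m : ℕ) (hm : Kstar.card = m) :
    ∀ j ∉ Kstar,
      (m : ℝ) * (1 + (m : ℝ) * δ) * x j ≤ (1 - δ) * ∑ k ∈ Kstar, x k ∧
      x j ≤ (1 - δ) * (∑ k ∈ Kstar, x k) / ((m : ℝ) * (1 + (m : ℝ) * δ)) := by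
  classical
  intro j hj
  have hf : f = subsetValue δ x := funext hf
  subst hf hm
  have hsmall := (subsetValue_insert_le_iff δ x hKne hj).mp (hmax _ (insert_nonempty j Kstar))
  have hpos : (0 : ℝ) < Kstar.card * (1 + Kstar.card * δ) := by
    have : (0 : ℝ) < Kstar.card := by exact_mod_cast hKne.card_pos
    positivity
  exact ⟨hsmall, (le_div_iff₀ hpos).mpr (by linarith)⟩

theorem non_dominant_small {ι : Type*} [Fintype ι] [DecidableEq ι]
    (δ : ℝ) (hδ0 : 0 < δ) (hδ1 : δ < 1) (x : ι → ℝ) (hx : ∀ k, 0 ≤ x k)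
    (f : Finset ι → ℝ)
    (hf : ∀ K : Finset ι, f K = ((1 + ((K.card : ℝ) - 1) * δ) / (K.card : ℝ)) * ∑ k ∈ K, x k)
    (Kstar : Finset ι) (hKne : Kstar.Nonempty)
    (hmax : ∀ K : Finset ι, K.Nonempty → f K ≤ f Kstar)
    (m : ℕ) (hm : Kstar.card = m) :
    ∀ j ∉ Kstar,
      (m : ℝ) * (1 + (m : ℝ) * δ) * x j ≤ (1 - δ) * ∑ k ∈ Kstar, x k ∧
      x j ≤ (1 - δ) * (∑ k ∈ Kstar, x k) / ((m : ℝ) * (1 + (m : ℝ) * δ)) :=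
  non_dominant_small_general δ hδ0 x f hf Kstar hKne hmax m hm
end

section
/- Let δ ∈ (0,1), 𝒦 a finite set partitioned into routes, and x : 𝒦 → ℝ≥0. For each route r let k_r denote its first subserver, and let f and the maximizer K* (the dominant set) be as in the piecewise-linear test function V(x) = max_K f(K). Suppose the state x lies in the invariant set Q (so along each route the values x are non-increasing, in particular the bottleneck value on route r is at most x(k_r)), and suppose each route that intersects K* has its bottleneck b satisfying f(K*\{b}) ≤ f(K*). If route r̂ achieves the minimum of x(k_r) over all routes and k_{r̂} ∈ K*, then k_r ∈ K* for every route r; equivalently, either the route minimizing the first-subserver queue is non-dominant, or every route's first subserver is dominant. -/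
/-!
Clearing denominators, the two optimality conditions of the dominant set `K` (with `m = #K`,
`S = ∑_K x`) read `(1 - δ) S ≤ m (1 + (m - 2) δ) x b` (removing its bottleneck `b` does not help)
and `m (1 + m δ) x k ≤ (1 - δ) S` (adding an outside element `k` does not help). When
`x b ≤ x k` the two are incompatible with `S > 0`, because `m (1 + m δ)` exceeds `m (1 + (m - 2) δ)`.
On the invariant set the bottleneck of the minimizing route is at most every first subserver, so no
first subserver can lie outside the dominant set.
-/

open Finset

/-- The paper's `f(K)`, whose maximum over nonempty `K` is the test function `V(x)`. -/
noncomputable def testValue {ι : Type*} (δ : ℝ) (x : ι → ℝ) (K : Finset ι) : ℝ :=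
  (1 + ((K.card : ℝ) - 1) * δ) / (K.card : ℝ) * ∑ k ∈ K, x k

section testValue

variable {ι : Type*} {δ : ℝ} {x : ι → ℝ} {K : Finset ι}

lemma testValue_coeff_pos (hδ : 0 ≤ δ) (hK : K.Nonempty) :
    0 < (1 + ((K.card : ℝ) - 1) * δ) / (K.card : ℝ) := by
  have hm : (1 : ℝ) ≤ K.card := by exact_mod_cast hK.card_pos
  exact div_pos (by nlinarith) (by linarith)

lemma testValue_pos (hδ : 0 ≤ δ) (hS : 0 < ∑ k ∈ K, x k) : 0 < testValue δ x K :=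
  mul_pos (testValue_coeff_pos hδ (nonempty_of_sum_ne_zero hS.ne')) hS

lemma sum_pos_of_testValue_pos (hδ : 0 ≤ δ) (hK : K.Nonempty) (h : 0 < testValue δ x K) :
    0 < ∑ k ∈ K, x k :=
  pos_of_mul_pos_right h (testValue_coeff_pos hδ hK).le

variable [DecidableEq ι] {b k : ι}

lemma sub_mul_sum_le_of_testValue_erase_le (hb : b ∈ K)
    (h : testValue δ x (K.erase b) ≤ testValue δ x K) :
    (1 - δ) * ∑ i ∈ K, x i ≤ K.card * (1 + ((K.card : ℝ) - 2) * δ) * x b := by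
  obtain hm | hm : K.card = 1 ∨ 2 ≤ K.card := by have := card_pos.mpr ⟨b, hb⟩; omega
  · obtain ⟨a, rfl⟩ := card_eq_one.mp hm
    obtain rfl := mem_singleton.mp hb
    simp only [card_singleton, sum_singleton, Nat.cast_one]
    linarith
  · have hm' : (2 : ℝ) ≤ K.card := by exact_mod_cast hm
    rw [testValue, testValue, card_erase_of_mem hb, sum_erase_eq_sub hb,
      Nat.cast_sub (by omega), Nat.cast_one, div_mul_eq_mul_div, div_mul_eq_mul_div,
      div_le_div_iff₀ (by linarith) (by linarith)] at h
    linear_combination h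

lemma card_mul_le_of_testValue_insert_le (hk : k ∉ K) (hK : K.Nonempty)
    (h : testValue δ x (insert k K) ≤ testValue δ x K) :
    K.card * (1 + K.card * δ) * x k ≤ (1 - δ) * ∑ i ∈ K, x i := by
  have hm : (1 : ℝ) ≤ K.card := by exact_mod_cast hK.card_pos
  rw [testValue, testValue, card_insert_of_notMem hk, sum_insert hk, Nat.cast_succ,
    div_mul_eq_mul_div, div_mul_eq_mul_div,
    div_le_div_iff₀ (by linarith) (by linarith)] at h
  linear_combination h

lemma testValue_lt_insert (hδ0 : 0 < δ) (hδ1 : δ < 1) (hb : b ∈ K)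
    (herase : testValue δ x (K.erase b) ≤ testValue δ x K) (hk : k ∉ K) (hbk : x b ≤ x k)
    (hS : 0 < ∑ i ∈ K, x i) : testValue δ x K < testValue δ x (insert k K) := by
  by_contra! hinsert
  have upper := sub_mul_sum_le_of_testValue_erase_le hb herase
  have lower := card_mul_le_of_testValue_insert_le hk ⟨b, hb⟩ hinsert
  have hm : (1 : ℝ) ≤ K.card := by exact_mod_cast card_pos.mpr ⟨b, hb⟩
  set m : ℝ := (K.card : ℝ)
  have hcoef : 0 ≤ m * (1 + (m - 2) * δ) := mul_nonneg (by linarith) (by nlinarith)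
  have hxb : m * (1 + (m - 2) * δ) * x b ≤ m * (1 + (m - 2) * δ) * x k :=
    mul_le_mul_of_nonneg_left hbk hcoef
  have hxk : x k ≤ 0 := by
    have h : (2 * m * δ) * x k ≤ (2 * m * δ) * 0 := by linear_combination lower + upper + hxb
    exact le_of_mul_le_mul_left h (by positivity)
  nlinarith [mul_pos (sub_pos.mpr hδ1) hS, mul_nonpos_of_nonneg_of_nonpos hcoef hxk]

end testValue

theorem min_route_non_dominant_or_all_dominant_general
    {ι ρ : Type*} [Fintype ι] [DecidableEq ι]
    (δ : ℝ) (hδ0 : 0 < δ) (hδ1 : δ < 1) (x : ι → ℝ)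
    (hpos : 0 < ∑ k, x k)
    (f : Finset ι → ℝ)
    (hf : ∀ K : Finset ι, f K = ((1 + ((K.card : ℝ) - 1) * δ) / (K.card : ℝ)) * ∑ k ∈ K, x k)
    (Kstar : Finset ι)
    (hmax : ∀ K : Finset ι, K.Nonempty → f K ≤ f Kstar)
    (onRoute : ι → ρ) (first : ρ → ι) (bneck : ρ → ι)
    (hfr : ∀ r : ρ, onRoute (first r) = r)
    -- invariant set: along each route values are non-increasing, in particular
    -- the bottleneck value on route r is at most the first subserver's value
    (hQ : ∀ r : ρ, x (bneck r) ≤ x (first r))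
    -- every route intersecting the dominant set has its bottleneck in Kstar
    -- and that bottleneck satisfies f(Kstar \ {b}) ≤ f(Kstar)
    (hbK : ∀ r : ρ, (∃ k ∈ Kstar, onRoute k = r) →
      bneck r ∈ Kstar ∧ f (Kstar.erase (bneck r)) ≤ f Kstar)
    (rhat : ρ) (hmin : ∀ r : ρ, x (first rhat) ≤ x (first r))
    (hdom : first rhat ∈ Kstar) :
    ∀ r : ρ, first r ∈ Kstar := by
  intro r
  by_contra hk
  obtain rfl : f = testValue δ x := funext hf
  obtain ⟨hb, herase⟩ := hbK rhat ⟨first rhat, hdom, hfr rhat⟩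
  have hS : 0 < ∑ i ∈ Kstar, x i :=
    sum_pos_of_testValue_pos hδ0.le ⟨_, hdom⟩
      ((testValue_pos hδ0.le hpos).trans_le (hmax _ (nonempty_of_sum_ne_zero hpos.ne')))
  exact (hmax _ (insert_nonempty _ _)).not_gt
    (testValue_lt_insert hδ0 hδ1 hb herase hk ((hQ rhat).trans (hmin r)) hS)

theorem min_route_non_dominant_or_all_dominant
    {ι ρ : Type*} [Fintype ι] [DecidableEq ι] [Fintype ρ]
    (δ : ℝ) (hδ0 : 0 < δ) (hδ1 : δ < 1) (x : ι → ℝ) (hx : ∀ k, 0 ≤ x k)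
    (hpos : 0 < ∑ k, x k)
    (f : Finset ι → ℝ)
    (hf : ∀ K : Finset ι, f K = ((1 + ((K.card : ℝ) - 1) * δ) / (K.card : ℝ)) * ∑ k ∈ K, x k)
    (Kstar : Finset ι) (hKne : Kstar.Nonempty)
    (hmax : ∀ K : Finset ι, K.Nonempty → f K ≤ f Kstar)
    (onRoute : ι → ρ) (first : ρ → ι) (bneck : ρ → ι)
    (hfr : ∀ r : ρ, onRoute (first r) = r)
    (hbr : ∀ r : ρ, onRoute (bneck r) = r)
    -- invariant set: along each route values are non-increasing, in particular
    -- the bottleneck value on route r is at most the first subserver's value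
    (hQ : ∀ r : ρ, x (bneck r) ≤ x (first r))
    -- every route intersecting the dominant set has its bottleneck in Kstar
    -- and that bottleneck satisfies f(Kstar \ {b}) ≤ f(Kstar)
    (hbK : ∀ r : ρ, (∃ k ∈ Kstar, onRoute k = r) →
      bneck r ∈ Kstar ∧ f (Kstar.erase (bneck r)) ≤ f Kstar)
    (rhat : ρ) (hmin : ∀ r : ρ, x (first rhat) ≤ x (first r))
    (hdom : first rhat ∈ Kstar) :
    ∀ r : ρ, first r ∈ Kstar :=
  min_route_non_dominant_or_all_dominant_general δ hδ0 hδ1 x hpos f hf Kstar hmax onRoute first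
    bneck hfr hQ hbK rhat hmin hdom
end

section
/- Let δ ∈ (0,1), 𝒦 a finite set, x : 𝒦 → ℝ≥0, with f and dominant maximizer K* as above, |K*| = m ≥ 2. Suppose k ∉ K* (k is non-dominant) and j ∈ K* (j is dominant), and suppose there exist b ∈ K* with f(K*\{b}) ≤ f(K*) and values satisfying x k ≥ x j ≥ x b. Then we reach a contradiction; that is, it is impossible that a transfer goes from a non-dominant subserver k to a dominant subserver j when x k ≥ x j and the bottleneck inequality f(K*\{b}) ≤ f(K*) holds with x j ≥ x b. -/
/-!
Write `m = #K*`, `S = ∑_{K*} x` and `f K = w(#K) · ∑_K x` with `w n = (1 + (n - 1)δ) / n`.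
After clearing denominators, `f(K* \ {b}) ≤ f(K*)` becomes `(1 - δ) S ≤ m (1 + (m - 2)δ) x_b`
and maximality against `K* ∪ {k}` becomes `m (1 + mδ) x_k ≤ (1 - δ) S`. Since `x_b ≤ x_k`, these
force `2mδ x_k ≤ 0`, hence `x_b ≤ x_k ≤ 0`, hence `S ≤ 0` and `f(K*) ≤ 0`. But `f {i} = x_i`,
so maximality gives `x_i ≤ 0` for every `i`, contradicting `0 < ∑ x`.
-/

open Finset

section WeightedLoad

variable {ι : Type*} (δ : ℝ) (x : ι → ℝ)

noncomputable def weightedLoad (K : Finset ι) : ℝ := (1 + ((#K : ℝ) - 1) * δ) / #K * ∑ i ∈ K, x i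

@[simp]
theorem weightedLoad_singleton (i : ι) : weightedLoad δ x {i} = x i := by
  simp [weightedLoad]

variable {δ x}

theorem weightedLoad_nonpos (hδ : 0 ≤ δ) {K : Finset ι} (hK : ∑ i ∈ K, x i ≤ 0) :
    weightedLoad δ x K ≤ 0 := by
  rcases K.eq_empty_or_nonempty with rfl | hne
  · simp [weightedLoad]
  have hcard : (1 : ℝ) ≤ #K := by exact_mod_cast hne.card_pos
  have hcoeff : 0 ≤ (1 + ((#K : ℝ) - 1) * δ) / #K :=
    div_nonneg (add_nonneg zero_le_one (mul_nonneg (sub_nonneg.2 hcard) hδ)) (Nat.cast_nonneg _)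
  exact mul_nonpos_of_nonneg_of_nonpos hcoeff hK

variable [DecidableEq ι]

theorem one_sub_mul_sum_le_of_weightedLoad_erase_le {K : Finset ι} {b : ι} (hb : b ∈ K)
    (hK : 2 ≤ #K) (h : weightedLoad δ x (K.erase b) ≤ weightedLoad δ x K) :
    (1 - δ) * ∑ i ∈ K, x i ≤ #K * (1 + (#K - 2) * δ) * x b := by
  have hm : (2 : ℝ) ≤ #K := by exact_mod_cast hK
  rw [weightedLoad, weightedLoad, cast_card_erase_of_mem hb, sum_erase_eq_sub hb,
    div_mul_eq_mul_div, div_mul_eq_mul_div, div_le_div_iff₀ (by linarith) (by linarith)] at h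
  linear_combination h

theorem mul_le_one_sub_mul_sum_of_weightedLoad_insert_le {K : Finset ι} {k : ι} (hk : k ∉ K)
    (hK : K.Nonempty) (h : weightedLoad δ x (insert k K) ≤ weightedLoad δ x K) :
    #K * (1 + #K * δ) * x k ≤ (1 - δ) * ∑ i ∈ K, x i := by
  have hm : (0 : ℝ) < #K := by exact_mod_cast hK.card_pos
  rw [weightedLoad, weightedLoad, card_insert_of_notMem hk, sum_insert hk, Nat.cast_succ,
    div_mul_eq_mul_div, div_mul_eq_mul_div, div_le_div_iff₀ (by linarith) hm] at h
  linear_combination h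

end WeightedLoad

theorem no_transfer_nondominant_to_dominant_general {ι : Type*} [Fintype ι] [DecidableEq ι]
    (δ : ℝ) (hδ0 : 0 < δ) (hδ1 : δ < 1) (x : ι → ℝ)
    (hpos : 0 < ∑ i, x i)
    (f : Finset ι → ℝ)
    (hf : ∀ K : Finset ι, f K = ((1 + ((K.card : ℝ) - 1) * δ) / (K.card : ℝ)) * ∑ i ∈ K, x i)
    (Kstar : Finset ι) (hm : 2 ≤ Kstar.card)
    (hmax : ∀ K : Finset ι, K.Nonempty → f K ≤ f Kstar)
    (k j b : ι) (hk : k ∉ Kstar) (hb : b ∈ Kstar)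
    (hbneck : f (Kstar.erase b) ≤ f Kstar)
    (hkj : x j ≤ x k) (hjb : x b ≤ x j) :
    False := by
  obtain rfl : f = weightedLoad δ x := funext hf
  have hErase := one_sub_mul_sum_le_of_weightedLoad_erase_le hb hm hbneck
  have hInsert := mul_le_one_sub_mul_sum_of_weightedLoad_insert_le hk ⟨b, hb⟩
    (hmax _ (insert_nonempty k Kstar))
  have hxbk : x b ≤ x k := hjb.trans hkj
  have hm' : (2 : ℝ) ≤ #Kstar := by exact_mod_cast hm
  have hcoeff : 0 ≤ (#Kstar : ℝ) * (1 + (#Kstar - 2) * δ) :=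
    mul_nonneg (by linarith) (add_nonneg zero_le_one (mul_nonneg (by linarith) hδ0.le))
  have hxk : x k ≤ 0 := by
    have : 2 * #Kstar * δ * x k ≤ 0 := by
      linarith [mul_le_mul_of_nonneg_left hxbk hcoeff]
    exact nonpos_of_mul_nonpos_right this (mul_pos (by linarith) hδ0)
  have hS : ∑ i ∈ Kstar, x i ≤ 0 := by
    have : (1 - δ) * ∑ i ∈ Kstar, x i ≤ 0 := by
      linarith [mul_le_mul_of_nonneg_left (hxbk.trans hxk) hcoeff]
    exact nonpos_of_mul_nonpos_right this (by linarith)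
  have hall : ∀ i, x i ≤ 0 := fun i =>
    (weightedLoad_singleton δ x i ▸ hmax {i} (singleton_nonempty i)).trans
      (weightedLoad_nonpos hδ0.le hS)
  exact (sum_nonpos fun i _ => hall i).not_gt hpos

theorem no_transfer_nondominant_to_dominant {ι : Type*} [Fintype ι] [DecidableEq ι]
    (δ : ℝ) (hδ0 : 0 < δ) (hδ1 : δ < 1) (x : ι → ℝ) (hx : ∀ i, 0 ≤ x i)
    (hpos : 0 < ∑ i, x i)
    (f : Finset ι → ℝ)
    (hf : ∀ K : Finset ι, f K = ((1 + ((K.card : ℝ) - 1) * δ) / (K.card : ℝ)) * ∑ i ∈ K, x i)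
    (Kstar : Finset ι) (hm : 2 ≤ Kstar.card)
    (hmax : ∀ K : Finset ι, K.Nonempty → f K ≤ f Kstar)
    (k j b : ι) (hk : k ∉ Kstar) (hj : j ∈ Kstar) (hb : b ∈ Kstar)
    (hbneck : f (Kstar.erase b) ≤ f Kstar)
    (hkj : x j ≤ x k) (hjb : x b ≤ x j) :
    False :=
  no_transfer_nondominant_to_dominant_general δ hδ0 hδ1 x hpos f hf Kstar hm hmax k j b hk hb hbneck
    hkj hjb
end
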